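/- arXiv:2204.01054 — 6 statements merged into one kernel-verified Lean document; each statement's English description precedes it below -/
import Mathlib

section
/- Let K be a field, G a finite group, and V a subspace of the group algebra K[G] spanned by the indicator elements of the parts of a partition C of G (an S-module). If v₁,...,vₘ are elements of V with vᵢ = Σ_{g∈G} λ_{i,g}·g, then for every function φ : K^m → K, the element Σ_{g∈G} φ(λ_{1,g},...,λ_{m,g})·g also lies in V. -/
/-!
The S-module spanned by the simple quantities of the parts of a partition consists exactly of the
elements whose coefficient function is constant on every part: each generator is, and this is a
linear condition; conversely such an element is the combination of the simple quantities with
those constant values. Applying `φ` pointwise preserves constancy on the parts.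
-/

open Finset

namespace MonoidAlgebra

variable {K G : Type*} [Semiring K]

noncomputable def simpleQuantity (s : Finset G) : MonoidAlgebra K G := ∑ g ∈ s, single g 1

lemma coeff_simpleQuantity [DecidableEq G] (s : Finset G) (a : G) :
    (simpleQuantity s : MonoidAlgebra K G).coeff a = if a ∈ s then 1 else 0 := by
  simp [simpleQuantity, coeff_sum, Finsupp.finsetSum_apply, Finsupp.single_apply]

variable [DecidableEq G] {s : Finset G} (P : Finpartition s)

lemma coeff_eq_coeff_of_mem_span_simpleQuantity {w : MonoidAlgebra K G}
    (hw : w ∈ Submodule.span K (simpleQuantity '' ↑P.parts)) {C : Finset G} (hC : C ∈ P.parts)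
    {g h : G} (hg : g ∈ C) (hh : h ∈ C) : w.coeff g = w.coeff h := by
  let coeffAt (a : G) : MonoidAlgebra K G →ₗ[K] K :=
    Finsupp.lapply a ∘ₗ (coeffLinearEquiv K).toLinearMap
  suffices Submodule.span K (simpleQuantity '' ↑P.parts) ≤ LinearMap.eqLocus (coeffAt g) (coeffAt h)
    from this hw
  rw [Submodule.span_le]
  rintro _ ⟨C', hC', rfl⟩
  have mem_iff (a : G) (ha : a ∈ C) : a ∈ C' ↔ C' = C :=
    ⟨fun haC' => P.eq_of_mem_parts hC' hC haC' ha, fun hCC' => hCC' ▸ ha⟩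
  change (simpleQuantity C').coeff g = (simpleQuantity C').coeff h
  rw [coeff_simpleQuantity, coeff_simpleQuantity, if_congr (mem_iff g hg) rfl rfl,
    if_congr (mem_iff h hh) rfl rfl]

lemma sum_single_mem_span_simpleQuantity {f : G → K}
    (hf : ∀ C ∈ P.parts, ∀ g ∈ C, ∀ h ∈ C, f g = f h) :
    ∑ g ∈ s, single g (f g) ∈ Submodule.span K (simpleQuantity '' ↑P.parts) := by
  have sum_parts : ∑ g ∈ s, single g (f g) = ∑ C ∈ P.parts, ∑ g ∈ C, single g (f g) := by
    conv_lhs => rw [← P.biUnion_parts]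
    exact sum_biUnion P.supIndep.pairwiseDisjoint
  rw [sum_parts]
  refine Submodule.sum_mem _ fun C hC => ?_
  obtain ⟨g₀, hg₀⟩ := P.nonempty_of_mem_parts hC
  have part_eq : ∑ g ∈ C, single g (f g) = f g₀ • simpleQuantity C := by
    rw [simpleQuantity, smul_sum]
    refine sum_congr rfl fun g hg => ?_
    rw [smul_single', mul_one, hf C hC g hg g₀ hg₀]
  rw [part_eq]
  exact Submodule.smul_mem _ _ (Submodule.subset_span ⟨C, hC, rfl⟩)

end MonoidAlgebra

open MonoidAlgebra in
theorem stmt_0_general {K : Type*} [Field K] {G : Type*} [Fintype G] [DecidableEq G]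
    (V : Submodule K (MonoidAlgebra K G)) (P : Finpartition (univ : Finset G))
    (hV : V = Submodule.span K
      ((fun C : Finset G => ∑ g ∈ C, MonoidAlgebra.single g (1 : K)) '' ↑P.parts))
    (m : ℕ) (v : Fin m → MonoidAlgebra K G) (hv : ∀ i, v i ∈ V)
    (φ : (Fin m → K) → K) :
    (∑ g : G, MonoidAlgebra.single g (φ fun i => (v i).coeff g)) ∈ V := by
  change V = Submodule.span K (simpleQuantity '' ↑P.parts) at hV
  subst hV
  refine sum_single_mem_span_simpleQuantity P fun C hC g hg h hh => ?_
  exact congrArg φ <| funext fun i =>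
    coeff_eq_coeff_of_mem_span_simpleQuantity P (hv i) hC hg hh

/-- extraction lemma for S-modules. -/
theorem stmt_0 {K : Type*} [Field K] {G : Type*} [Group G] [Fintype G] [DecidableEq G]
    (V : Submodule K (MonoidAlgebra K G)) (P : Finpartition (univ : Finset G))
    (hV : V = Submodule.span K
      ((fun C : Finset G => ∑ g ∈ C, MonoidAlgebra.single g (1 : K)) '' ↑P.parts))
    (m : ℕ) (v : Fin m → MonoidAlgebra K G) (hv : ∀ i, v i ∈ V)
    (φ : (Fin m → K) → K) :
    (∑ g : G, MonoidAlgebra.single g (φ fun i => (v i).coeff g)) ∈ V :=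
  stmt_0_general V P hV m v hv φ
end

section
/- For every ε > 0, the set of natural numbers n with d(n) ≤ (log n)^{1+ε} has natural density 1, where d(n) denotes the number of divisors of n. -/
/-!
Summing `N / d` over `d ≤ N` gives `∑_{n ≤ N} d(n) ≤ N (1 + log N)`, so by Markov's inequality
at most `2^(1+ε) N (1 + log N) / (log N)^(1+ε) = o(N)` integers `n ≤ N` have
`d(n) ≥ (log N / 2)^(1+ε)`. An exceptional `n > √N` has `log n ≥ log N / 2` and is one of them,
and there are only `√N = o(N)` integers `n ≤ √N`.
-/

open Finset Filter Real Topology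

lemma sum_card_divisors_Icc_le (N : ℕ) :
    ∑ n ∈ Icc 1 N, (#n.divisors : ℝ) ≤ N * (1 + log N) := by
  have h := congrArg (Nat.cast : ℕ → ℝ) (ArithmeticFunction.sum_Ioc_sigma0_eq_sum_div N)
  simp only [ArithmeticFunction.sigma_zero_apply, Nat.cast_sum] at h
  calc ∑ n ∈ Icc 1 N, (#n.divisors : ℝ) = ∑ n ∈ Icc 1 N, ((N / n : ℕ) : ℝ) := h
    _ ≤ ∑ n ∈ Icc 1 N, (N / n : ℝ) := sum_le_sum fun _ _ => Nat.cast_div_le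
    _ = N * harmonic N := by simp [harmonic_eq_sum_Icc, mul_sum, div_eq_mul_inv]
    _ ≤ N * (1 + log N) := by gcongr; exact harmonic_le_one_add_log N

theorem Finset.card_filter_le_nsmul_le_sum {ι M : Type*} [AddCommMonoid M] [PartialOrder M]
    [IsOrderedAddMonoid M] [DecidableLE M] {s : Finset ι} {f : ι → M} (hf : ∀ i ∈ s, 0 ≤ f i)
    (t : M) :
    #{i ∈ s | t ≤ f i} • t ≤ ∑ i ∈ s, f i :=
  calc #{i ∈ s | t ≤ f i} • t ≤ ∑ i ∈ s with t ≤ f i, f i :=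
        card_nsmul_le_sum _ _ _ fun _ hi => (mem_filter.1 hi).2
    _ ≤ ∑ i ∈ s, f i :=
        sum_le_sum_of_subset_of_nonneg (filter_subset _ _) fun i hi _ => hf i hi

lemma log_le_two_mul_log_of_sqrt_lt {N n : ℕ} (h : Nat.sqrt N < n) : log N ≤ 2 * log n := by
  rcases N.eq_zero_or_pos with rfl | hN
  · simpa using log_natCast_nonneg n
  calc log N ≤ log ((n : ℝ) ^ 2) :=
        log_le_log (by exact_mod_cast hN) (by exact_mod_cast (Nat.sqrt_lt'.1 h).le)
    _ = 2 * log n := by rw [log_pow]; norm_num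

lemma card_filter_rpow_log_lt_card_divisors_le {a : ℝ} (ha : 0 ≤ a) (N : ℕ) :
    #{n ∈ Icc 1 N | log (n : ℕ) ^ a < #n.divisors} ≤
      Nat.sqrt N + #{n ∈ Icc 1 N | (log N / 2) ^ a ≤ #n.divisors} := by
  rw [← card_filter_add_card_filter_not (· ≤ Nat.sqrt N)]
  gcongr
  · calc _ ≤ #(Icc 1 (Nat.sqrt N)) := card_le_card fun n hn => by simp_all
      _ = Nat.sqrt N := by simp
  · intro n hn
    simp only [mem_filter, not_le] at hn ⊢
    refine ⟨hn.1.1, le_trans ?_ hn.1.2.le⟩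
    have := log_le_two_mul_log_of_sqrt_lt hn.2
    exact rpow_le_rpow (by positivity) (by linarith) ha

lemma card_filter_rpow_log_lt_card_divisors_div_le {a : ℝ} (ha : 0 ≤ a) {N : ℕ} (hN : 1 < N) :
    (#{n ∈ Icc 1 N | log (n : ℕ) ^ a < #n.divisors} : ℝ) / N ≤
      Nat.sqrt N / N + 2 ^ a * ((1 + log N) / log N ^ a) := by
  have hlogN : 0 < log N := log_pos (by exact_mod_cast hN)
  have hT : 0 < (log N / 2) ^ a := by positivity
  have hmarkov : (#{n ∈ Icc 1 N | (log N / 2) ^ a ≤ #n.divisors} : ℝ) ≤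
      N * (1 + log N) / (log N / 2) ^ a := by
    rw [le_div_iff₀ hT, ← nsmul_eq_mul]
    exact (card_filter_le_nsmul_le_sum (fun _ _ => by positivity) _).trans
      (sum_card_divisors_Icc_le N)
  rw [div_le_iff₀ (by positivity)]
  calc (#{n ∈ Icc 1 N | log (n : ℕ) ^ a < #n.divisors} : ℝ)
      ≤ Nat.sqrt N + #{n ∈ Icc 1 N | (log N / 2) ^ a ≤ #n.divisors} := by
        exact_mod_cast card_filter_rpow_log_lt_card_divisors_le ha N
    _ ≤ Nat.sqrt N + N * (1 + log N) / (log N / 2) ^ a := by gcongr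
    _ = _ := by
        rw [div_rpow (log_natCast_nonneg N) zero_le_two]
        field_simp

lemma tendsto_nat_sqrt_div_atTop : Tendsto (fun N : ℕ => (Nat.sqrt N : ℝ) / N) atTop (𝓝 0) := by
  have h : Tendsto (fun N : ℕ => (√(N : ℝ))⁻¹) atTop (𝓝 0) :=
    tendsto_inv_atTop_zero.comp (tendsto_sqrt_atTop.comp tendsto_natCast_atTop_atTop)
  refine squeeze_zero (fun N => by positivity) (fun N => ?_) h
  rw [← sqrt_div_self]
  gcongr
  exact nat_sqrt_le_real_sqrt

lemma tendsto_one_add_div_rpow_atTop {a : ℝ} (ha : 1 < a) :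
    Tendsto (fun x : ℝ => (1 + x) / x ^ a) atTop (𝓝 0) := by
  have h : Tendsto (fun x : ℝ => x ^ (-a) + x ^ (-(a - 1))) atTop (𝓝 0) := by
    simpa using (tendsto_rpow_neg_atTop (by linarith)).add
      (tendsto_rpow_neg_atTop (by linarith : 0 < a - 1))
  refine h.congr' ?_
  filter_upwards [eventually_gt_atTop 0] with x hx
  rw [rpow_neg hx.le, rpow_neg hx.le, rpow_sub hx, rpow_one]
  field_simp

lemma tendsto_card_filter_div_one_of_not {p : ℕ → Prop} [DecidablePred p]
    (h : Tendsto (fun N : ℕ => (#{n ∈ Icc 1 N | ¬ p n} : ℝ) / N) atTop (𝓝 0)) :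
    Tendsto (fun N : ℕ => (#{n ∈ Icc 1 N | p n} : ℝ) / N) atTop (𝓝 1) := by
  have h1 := (tendsto_const_nhds (x := (1 : ℝ))).sub h
  rw [sub_zero] at h1
  refine h1.congr' ?_
  filter_upwards [eventually_ge_atTop 1] with N hN
  have hcard : (#{n ∈ Icc 1 N | p n} : ℝ) + #{n ∈ Icc 1 N | ¬ p n} = N := by
    exact_mod_cast (card_filter_add_card_filter_not p).trans (by simp)
  have : (0 : ℝ) < N := by exact_mod_cast hN
  field_simp
  linarith

/-- for every ε > 0, almost all n satisfy d(n) ≤ (log n)^{1+ε}. -/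
theorem stmt_5 (ε : ℝ) (hε : 0 < ε) :
    Filter.Tendsto
      (fun N : ℕ =>
        (((Finset.Icc 1 N).filter
            (fun n : ℕ => (n.divisors.card : ℝ) ≤ Real.log n ^ (1 + ε))).card : ℝ) / (N : ℝ))
      Filter.atTop (nhds 1) := by
  refine tendsto_card_filter_div_one_of_not ?_
  simp only [not_le]
  have hbound : Tendsto (fun N : ℕ => (Nat.sqrt N : ℝ) / N +
      2 ^ (1 + ε) * ((1 + log N) / log N ^ (1 + ε))) atTop (𝓝 0) := by
    simpa using tendsto_nat_sqrt_div_atTop.add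
      (((tendsto_one_add_div_rpow_atTop (by linarith)).comp
        (tendsto_log_atTop.comp tendsto_natCast_atTop_atTop)).const_mul (2 ^ (1 + ε)))
  refine squeeze_zero' (Eventually.of_forall fun N => by positivity) ?_ hbound
  filter_upwards [eventually_gt_atTop 1] with N hN
  exact card_filter_rpow_log_lt_card_divisors_div_le (by linarith) hN
end

section
/- Let p be prime, ξ ∈ ℂ a primitive p-th root of unity, and ∅ ≠ S ⊆ ℤ_p \ {0}. For k ∈ ℤ_p set λ_k = Σ_{s∈S} ξ^{sk}. Then for nonzero k, k' ∈ ℤ_p: λ_k = λ_{k'} if and only if there exists ℓ ∈ ℤ_p \ {0} with k = ℓ·k' and {s·ℓ : s ∈ S} = S. -/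
/-!
Multiplication by `k ≠ 0` permutes `ℤ_p \ {0}`, so `λ_k` is the sum of `ξ ^ t` over the dilate
`S·k ⊆ ℤ_p \ {0}`. The minimal polynomial of `ξ` over `ℚ` is the cyclotomic polynomial of degree
`p - 1`, so `ξ, ξ², …, ξ^(p-1)` are linearly independent over `ℚ` and such a sum determines the
subset. Hence `λ_k = λ_{k'}` iff `S·k = S·k'`, i.e. iff `S·(k/k') = S`.
-/

open Finset

theorem LinearIndepOn.finset_sum_injOn {ι R M : Type*} [Ring R] [Nontrivial R] [AddCommGroup M]
    [Module R M] [DecidableEq ι] {v : ι → M} {s : Set ι} (hv : LinearIndepOn R v s)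
    {A B : Finset ι} (hA : (A : Set ι) ⊆ s) (hB : (B : Set ι) ⊆ s)
    (h : ∑ i ∈ A, v i = ∑ i ∈ B, v i) : A = B := by
  set g : ι → R := fun i => (if i ∈ A then 1 else 0) - (if i ∈ B then 1 else 0)
  have hg : ∑ i ∈ A ∪ B, g i • v i = 0 := by
    simp only [g, sub_smul, ite_smul, one_smul, zero_smul, sum_sub_distrib, sum_ite_mem,
      union_inter_cancel_left, union_inter_cancel_right, h, sub_self]
  have hzero := linearIndepOn_iff'.mp hv (A ∪ B) g (by simpa using ⟨hA, hB⟩) hg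
  ext i
  by_cases hiA : i ∈ A <;> by_cases hiB : i ∈ B <;> simp only [hiA, hiB]
  · simpa [g, hiA, hiB] using hzero i (mem_union_left B hiA)
  · simpa [g, hiA, hiB] using hzero i (mem_union_right A hiB)

theorem IsPrimitiveRoot.linearIndepOn_pow_val {p : ℕ} [Fact p.Prime] {ξ : ℂ}
    (hξ : IsPrimitiveRoot ξ p) :
    LinearIndepOn ℚ (fun t : ZMod p => ξ ^ t.val) {0}ᶜ := by
  have hp := (Fact.out : p.Prime)
  have hdeg : (minpoly ℚ ξ).natDegree = p - 1 := by
    rw [← Polynomial.cyclotomic_eq_minpoly_rat hξ hp.pos, Polynomial.natDegree_cyclotomic,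
      Nat.totient_prime hp]
  have hpow : LinearIndependent ℚ fun i : Fin (p - 1) => ξ ^ (i : ℕ) :=
    hdeg ▸ linearIndependent_pow ξ
  have hmul : LinearMap.ker (LinearMap.mulLeft ℚ ξ) = ⊥ :=
    LinearMap.ker_eq_bot.mpr (mul_right_injective₀ (hξ.ne_zero hp.ne_zero))
  have hval (t : ({0}ᶜ : Set (ZMod p))) : t.1.val - 1 + 1 = t.1.val :=
    Nat.sub_add_cancel (Nat.one_le_iff_ne_zero.mpr ((ZMod.val_ne_zero _).mpr t.2))
  -- `ξ ^ t = ξ * ξ ^ (t - 1)` moves the exponents `1, …, p - 1` onto `0, …, p - 2`.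
  let shift : ({0}ᶜ : Set (ZMod p)) → Fin (p - 1) := fun t =>
    ⟨t.1.val - 1, by have := t.1.val_lt; have := hp.two_le; omega⟩
  have hshift : Function.Injective shift := fun t u htu => Subtype.ext <|
    ZMod.val_injective p (by rw [← hval t, ← hval u]; exact congrArg (·.val + 1) htu)
  have hfun : (LinearMap.mulLeft ℚ ξ ∘ fun i : Fin (p - 1) => ξ ^ (i : ℕ)) ∘ shift =
      fun t => ξ ^ t.1.val := by
    funext t
    simp only [Function.comp_apply, LinearMap.mulLeft_apply, shift, ← pow_succ', hval]
  have := (hpow.map' _ hmul).comp shift hshift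
  rwa [hfun] at this

theorem Finset.image_mul_right_eq_image_mul_right_iff {G : Type*} [GroupWithZero G]
    [DecidableEq G] (S : Finset G) (k : G) {k' : G} (hk' : k' ≠ 0) :
    S.image (· * k) = S.image (· * k') ↔ S.image (· * (k * k'⁻¹)) = S := by
  have hk : S.image (· * k) = (S.image (· * (k * k'⁻¹))).image (· * k') := by
    rw [image_image]
    exact image_congr fun s _ => by simp [mul_assoc, hk']
  rw [hk, (image_injective (mul_left_injective₀ hk')).eq_iff]

theorem stmt_10_general (p : ℕ) [Fact p.Prime] (ξ : ℂ) (hξ : IsPrimitiveRoot ξ p)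
    (S : Finset (ZMod p)) (h0 : (0 : ZMod p) ∉ S)
    (k k' : ZMod p) (hk : k ≠ 0) (hk' : k' ≠ 0) :
    (∑ s ∈ S, ξ ^ (s * k).val) = (∑ s ∈ S, ξ ^ (s * k').val) ↔
      ∃ l : ZMod p, l ≠ 0 ∧ k = l * k' ∧ S.image (fun s => s * l) = S := by
  have hsum {c : ZMod p} (hc : c ≠ 0) :
      ∑ s ∈ S, ξ ^ (s * c).val = ∑ t ∈ S.image (· * c), ξ ^ t.val :=
    (sum_image (f := fun t => ξ ^ t.val) fun _ _ _ _ h => mul_right_cancel₀ hc h).symm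
  have hsupp {c : ZMod p} (hc : c ≠ 0) : (S.image (· * c) : Set (ZMod p)) ⊆ {0}ᶜ := by
    simpa [Set.subset_def] using fun s hs => mul_ne_zero (ne_of_mem_of_not_mem hs h0) hc
  have hinj : ∑ t ∈ S.image (· * k), ξ ^ t.val = ∑ t ∈ S.image (· * k'), ξ ^ t.val ↔
      S.image (· * k) = S.image (· * k') :=
    ⟨hξ.linearIndepOn_pow_val.finset_sum_injOn (hsupp hk) (hsupp hk'), fun h => h ▸ rfl⟩
  rw [hsum hk, hsum hk', hinj, image_mul_right_eq_image_mul_right_iff S k hk']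
  constructor
  · exact fun h =>
      ⟨k * k'⁻¹, mul_ne_zero hk (inv_ne_zero hk'), (inv_mul_cancel_right₀ hk' k).symm, h⟩
  · rintro ⟨l, -, rfl, hl⟩
    rwa [mul_inv_cancel_right₀ hk']

/-- for nonzero k, k', the eigenvalues λ_k and λ_{k'} coincide iff
k = ℓ·k' for some nonzero ℓ with S·ℓ = S. -/
theorem stmt_10 (p : ℕ) [Fact p.Prime] (ξ : ℂ) (hξ : IsPrimitiveRoot ξ p)
    (S : Finset (ZMod p)) (hS : S.Nonempty) (h0 : (0 : ZMod p) ∉ S)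
    (k k' : ZMod p) (hk : k ≠ 0) (hk' : k' ≠ 0) :
    (∑ s ∈ S, ξ ^ (s * k).val) = (∑ s ∈ S, ξ ^ (s * k').val) ↔
      ∃ l : ZMod p, l ≠ 0 ∧ k = l * k' ∧ S.image (fun s => s * l) = S :=
  stmt_10_general p ξ hξ S h0 k k' hk hk'
end

section
/- Let p be prime and ξ ∈ ℂ a primitive p-th root of unity. Then every square submatrix of the p × p Vandermonde matrix (ξ^{ij})_{0 ≤ i,j ≤ p−1} is invertible. (Chebotarëv's theorem on roots of unity.) -/
/-!
Put `a i = I i`, `b j = J j`, `m = 0 + 1 + ⋯ + (n - 1)` and `P = det (X ^ (a i * b j)) ∈ ℤ[X]`.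
Expanding `P (X + 1) = det ((1 + X) ^ (a i * b j))` row by row, the coefficient of `X ^ c` is the
sum of the determinants `det (choose (a i * b j) (k i))` over the `k` with `∑ k i = c`. Up to the
factor `∏ (k i)!`, row `i` of such a determinant is a polynomial of degree `k i` in `b j` with
leading coefficient `a i ^ k i`, so it vanishes unless the `k i` are distinct, which forces `c ≥ m`;
for `c = m` the `k` are the permutations of `0, …, n - 1` and the sum is `V(a) V(b) / ∏ i!`, a
product of Vandermonde determinants. Hence `P = (X - 1) ^ m * Q` with `∏ i! * Q 1 = V(a) V(b)`,
which is prime to `p` since the `a i` (and the `b j`) are distinct mod `p`. But if `P ξ = 0`,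
then `Q ξ = 0`, the cyclotomic polynomial `Φ_p` divides `Q`, and `p = Φ_p 1` divides `Q 1`.
-/

open Finset Polynomial Matrix Function Nat

namespace Fin

variable {n : ℕ}

theorem val_le_of_strictMono {f : Fin n → ℕ} (hf : StrictMono f) (i : Fin n) : (i : ℕ) ≤ f i := by
  obtain ⟨i, hi⟩ := i
  induction i with
  | zero => exact Nat.zero_le _
  | succ i ih =>
    exact (ih (by omega)).trans_lt
      (hf (show (⟨i, by omega⟩ : Fin n) < ⟨i + 1, hi⟩ from Nat.lt_succ_self i))

theorem val_le_apply_sort {k : Fin n → ℕ} (hk : Injective k) (i : Fin n) :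
    (i : ℕ) ≤ k (Tuple.sort k i) :=
  val_le_of_strictMono
    ((Tuple.monotone_sort k).strictMono_of_injective (hk.comp (Tuple.sort k).injective)) i

theorem sum_val_le_sum_of_injective {k : Fin n → ℕ} (hk : Injective k) :
    ∑ i : Fin n, (i : ℕ) ≤ ∑ i, k i :=
  calc ∑ i : Fin n, (i : ℕ) ≤ ∑ i, k (Tuple.sort k i) :=
        sum_le_sum fun i _ => val_le_apply_sort hk i
    _ = ∑ i, k i := Equiv.sum_comp (Tuple.sort k) k

theorem exists_perm_eq_val_of_sum_le {k : Fin n → ℕ} (hk : Injective k)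
    (hsum : ∑ i, k i ≤ ∑ i : Fin n, (i : ℕ)) : ∃ σ : Equiv.Perm (Fin n), ∀ i, k i = σ i := by
  set τ := Tuple.sort k
  have hsum_eq : ∑ i : Fin n, (i : ℕ) = ∑ i, k (τ i) := by
    rw [Equiv.sum_comp τ k]
    exact le_antisymm (sum_val_le_sum_of_injective hk) hsum
  have hτ := (sum_eq_sum_iff_of_le fun i _ => val_le_apply_sort hk i).1 hsum_eq
  exact ⟨τ⁻¹, fun i => by simpa [τ] using (hτ (τ⁻¹ i) (mem_univ _)).symm⟩

theorem sum_piAntidiag_eq_sum_perm {M : Type*} [AddCommMonoid M] (f : (Fin n → ℕ) → M)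
    (hf : ∀ k ∈ piAntidiag univ (∑ i : Fin n, (i : ℕ)), ¬Injective k → f k = 0) :
    ∑ k ∈ piAntidiag univ (∑ i : Fin n, (i : ℕ)), f k =
      ∑ σ : Equiv.Perm (Fin n), f fun i => σ i := by
  symm
  refine sum_bij_ne_zero (fun σ _ _ => fun i => σ i) (fun σ _ _ => ?_) ?_ ?_ fun _ _ _ => rfl
  · simpa using Equiv.sum_comp σ (fun i : Fin n => (i : ℕ))
  · intro σ _ _ τ _ _ h
    exact Equiv.ext fun i => val_injective (congrFun h i)
  · intro k hk hfk
    obtain ⟨σ, hσ⟩ := exists_perm_eq_val_of_sum_le (not_not.1 (mt (hf k hk) hfk))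
      (mem_piAntidiag.1 hk).1.le
    exact ⟨σ, mem_univ _, by rwa [funext hσ] at hfk, (funext hσ).symm⟩

end Fin

section CommRing

variable {R : Type*} [CommRing R]

theorem Matrix.det_of_sum {ι κ : Type*} [Fintype ι] [DecidableEq ι] (s : ι → Finset κ)
    (f : ι → κ → ι → R) :
    (of fun i j => ∑ d ∈ s i, f i d j).det =
      ∑ d ∈ Fintype.piFinset s, (of fun i j => f i (d i) j).det := by
  have hrows : (of fun i j => ∑ d ∈ s i, f i d j) = fun i => ∑ d ∈ s i, f i d := by
    ext i j
    simp [Finset.sum_apply]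
  rw [hrows]
  exact (detRowAlternating (n := ι) (R := R)).toMultilinearMap.map_sum_finset f s

theorem Matrix.coeff_det {ι : Type*} [Fintype ι] [DecidableEq ι] (M : Matrix ι ι R[X]) (c : ℕ) :
    M.det.coeff c = ∑ k ∈ piAntidiag univ c, (of fun i j => (M i j).coeff (k i)).det := by
  obtain ⟨N, hcN, hN⟩ : ∃ N, c < N ∧ ∀ i j, (M i j).natDegree < N := by
    refine ⟨c + 1 + ∑ i, ∑ j, (M i j).natDegree, by omega, fun i j => ?_⟩
    have := (single_le_sum (fun j _ => Nat.zero_le _) (mem_univ j)).trans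
      (single_le_sum (f := fun i => ∑ j, (M i j).natDegree) (fun i _ => Nat.zero_le _) (mem_univ i))
    omega
  have hM : M = of fun i j => ∑ d ∈ range N, X ^ d * C ((M i j).coeff d) := by
    ext1 i j
    rw [of_apply]
    conv_lhs => rw [as_sum_range_C_mul_X_pow' (M i j) (hN i j)]
    simp only [mul_comm]
  have hterm : ∀ k : ι → ℕ, (of fun i j => X ^ k i * C ((M i j).coeff (k i))).det =
      C (of fun i j => (M i j).coeff (k i)).det * X ^ ∑ i, k i := by
    intro k
    have := det_mul_column (fun i => (X : R[X]) ^ k i) (of fun i j => C ((M i j).coeff (k i)))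
    simp only [of_apply] at this
    rw [this, prod_pow_eq_pow_sum, RingHom.map_det, mul_comm]
    rfl
  have hsupp : (Fintype.piFinset fun _ : ι => range N).filter (fun k => c = ∑ i, k i) =
      piAntidiag univ c := by
    ext k
    simp only [mem_filter, Fintype.mem_piFinset, mem_range, mem_piAntidiag, ne_eq, mem_univ,
      imp_true_iff, and_true]
    refine ⟨fun h => h.2.symm, fun h => ⟨fun i => ?_, h.symm⟩⟩
    exact (single_le_sum (f := k) (fun i _ => Nat.zero_le _) (mem_univ i)).trans_lt (h ▸ hcN)
  conv_lhs => rw [hM, det_of_sum, finsetSum_coeff]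
  simp_rw [hterm, coeff_C_mul_X_pow]
  rw [← sum_filter, hsupp]

theorem Matrix.det_of_pow_eq_zero {n : ℕ} (w : Fin n → R) {k : Fin n → ℕ} (hk : ¬Injective k) :
    (of fun i j => w j ^ k i).det = 0 := by
  obtain ⟨i, i', h, hne⟩ : ∃ i i', k i = k i' ∧ i ≠ i' := by
    simpa [Injective] using hk
  exact det_zero_of_row_eq hne (funext fun j => by simp [h])

/- Expanding row `i` in the monomials `w j ^ d` with `d ≤ k i`, only `d = k` survives: any other
such `d` has `∑ d < ∑ k ≤ m`, so it repeats an exponent. -/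
theorem Matrix.det_of_eval_eq_prod_coeff_mul {n : ℕ} (q : Fin n → R[X]) (w : Fin n → R)
    {k : Fin n → ℕ} (hdeg : ∀ i, (q i).natDegree ≤ k i) (hk : ∑ i, k i ≤ ∑ i : Fin n, (i : ℕ)) :
    (of fun i j => (q i).eval (w j)).det =
      (∏ i, (q i).coeff (k i)) * (of fun i j => w j ^ k i).det := by
  have hexp : (of fun i j => (q i).eval (w j)) =
      of fun i j => ∑ d ∈ range (k i + 1), (q i).coeff d * w j ^ d := by
    ext i j
    exact eval_eq_sum_range' (Nat.lt_succ_of_le (hdeg i)) (w j)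
  have hterm : ∀ d : Fin n → ℕ, (of fun i j => (q i).coeff (d i) * w j ^ d i).det =
      (∏ i, (q i).coeff (d i)) * (of fun i j => w j ^ d i).det := fun d => by
    simpa using det_mul_column (fun i => (q i).coeff (d i)) (of fun i j => w j ^ d i)
  rw [hexp, det_of_sum]
  simp_rw [hterm]
  refine sum_eq_single_of_mem k (Fintype.mem_piFinset.2 fun i => self_mem_range_succ _) ?_
  intro d hd hne
  have hdk : ∀ i, d i ≤ k i := fun i =>
    Nat.lt_succ_iff.1 (mem_range.1 (Fintype.mem_piFinset.1 hd i))
  suffices ¬Injective d by rw [det_of_pow_eq_zero w this, mul_zero]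
  intro hinj
  have hle : ∑ i, d i ≤ ∑ i, k i := sum_le_sum fun i _ => hdk i
  have := Fin.sum_val_le_sum_of_injective hinj
  exact hne (funext fun i => (sum_eq_sum_iff_of_le fun i _ => hdk i).1 (by omega) i (mem_univ i))

theorem Matrix.sum_perm_prod_pow_mul_det {n : ℕ} (a b : Fin n → R) :
    ∑ σ : Equiv.Perm (Fin n), (∏ i, a i ^ (σ i : ℕ)) * (of fun i j => b j ^ (σ i : ℕ)).det =
      (vandermonde a).det * (vandermonde b).det := by
  have hperm : ∀ σ : Equiv.Perm (Fin n),
      (of fun i j => b j ^ (σ i : ℕ)).det = Equiv.Perm.sign σ * (vandermonde b).det := fun σ => by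
    rw [← det_transpose (vandermonde b), ← det_permute]
    rfl
  simp_rw [hperm]
  rw [← det_transpose (vandermonde a), det_apply (vandermonde a)ᵀ, sum_mul]
  refine sum_congr rfl fun σ _ => ?_
  simp only [transpose_apply, vandermonde_apply, Units.smul_def, zsmul_eq_mul]
  ring

theorem Polynomial.coeff_comp_C_mul_X (f : R[X]) (a : R) (d : ℕ) :
    (f.comp (C a * X)).coeff d = a ^ d * f.coeff d := by
  induction f using Polynomial.induction_on' with
  | add p q hp hq => simp [add_comp, hp, hq, mul_add]
  | monomial e c =>
    rw [monomial_comp, mul_pow, ← C_pow, ← mul_assoc, ← C_mul, coeff_C_mul_X_pow, coeff_monomial]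
    split_ifs <;> simp_all [mul_comm]

theorem Polynomial.exists_eq_X_sub_one_pow_mul (P : R[X]) (m : ℕ)
    (h : ∀ c < m, (P.comp (X + 1)).coeff c = 0) :
    ∃ Q : R[X], P = (X - 1) ^ m * Q ∧ Q.eval 1 = (P.comp (X + 1)).coeff m := by
  obtain ⟨G, hG⟩ := X_pow_dvd_iff.2 h
  refine ⟨G.comp (X - 1), ?_, ?_⟩
  · calc P = (P.comp (X + 1)).comp (X - 1) := by simp [comp_assoc]
      _ = (X - 1) ^ m * G.comp (X - 1) := by rw [hG, mul_comp, X_pow_comp]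
  · rw [eval_comp, hG, coeff_X_pow_mul', if_pos le_rfl, Nat.sub_self, coeff_zero_eq_eval_zero]
    simp

end CommRing

section ShiftedDeterminant

variable {n : ℕ} (a b : Fin n → ℕ)

theorem prod_factorial_mul_det_choose (k : Fin n → ℕ) (hk : ∑ i, k i ≤ ∑ i : Fin n, (i : ℕ)) :
    (∏ i, ((k i)! : ℤ)) * (of fun i j => ((a i * b j).choose (k i) : ℤ)).det =
      (∏ i, (a i : ℤ) ^ k i) * (of fun i j => (b j : ℤ) ^ k i).det := by
  set q : Fin n → ℤ[X] := fun i => (descPochhammer ℤ (k i)).comp (C (a i : ℤ) * X)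
  have hq : (of fun i j => (k i)! * ((a i * b j).choose (k i) : ℤ)) =
      of fun i j => (q i).eval (b j : ℤ) := by
    ext i j
    simp only [of_apply, q, eval_comp, eval_mul, eval_C, eval_X]
    rw [show (a i : ℤ) * b j = ((a i * b j : ℕ) : ℤ) by push_cast; rfl,
      descPochhammer_eval_eq_descFactorial, Nat.descFactorial_eq_factorial_mul_choose, Nat.cast_mul]
  have hdeg : ∀ i, (q i).natDegree ≤ k i := fun i => by
    have hlin : (C (a i : ℤ) * X).natDegree ≤ 1 := (natDegree_C_mul_le _ X).trans natDegree_X_le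
    calc (q i).natDegree ≤ k i * (C (a i : ℤ) * X).natDegree := by
          simpa only [q, descPochhammer_natDegree] using
            natDegree_comp_le (p := descPochhammer ℤ (k i)) (q := C (a i : ℤ) * X)
      _ ≤ k i := by simpa using Nat.mul_le_mul_left (k i) hlin
  have hcoeff : ∀ i, (q i).coeff (k i) = (a i : ℤ) ^ k i := fun i => by
    have := (monic_descPochhammer ℤ (k i)).coeff_natDegree
    rw [descPochhammer_natDegree] at this
    rw [coeff_comp_C_mul_X, this, mul_one]
  have hscale :=
    det_mul_column (fun i => ((k i)! : ℤ)) (of fun i j => ((a i * b j).choose (k i) : ℤ))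
  simp only [of_apply] at hscale
  rw [← hscale, hq, det_of_eval_eq_prod_coeff_mul q _ hdeg hk]
  simp [hcoeff]

theorem det_choose_eq_zero_of_not_injective {k : Fin n → ℕ} (hk : ¬Injective k)
    (hsum : ∑ i, k i ≤ ∑ i : Fin n, (i : ℕ)) :
    (of fun i j => ((a i * b j).choose (k i) : ℤ)).det = 0 := by
  have := prod_factorial_mul_det_choose a b k hsum
  rw [det_of_pow_eq_zero _ hk, mul_zero] at this
  exact (mul_eq_zero.1 this).resolve_left (prod_ne_zero_iff.2 fun i _ => by positivity)

theorem coeff_det_X_add_one_pow (c : ℕ) :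
    (of fun i j => (X + 1 : ℤ[X]) ^ (a i * b j)).det.coeff c =
      ∑ k ∈ piAntidiag univ c, (of fun i j => ((a i * b j).choose (k i) : ℤ)).det := by
  simp only [coeff_det, of_apply, coeff_X_add_one_pow]

theorem coeff_det_X_add_one_pow_of_lt {c : ℕ} (hc : c < ∑ i : Fin n, (i : ℕ)) :
    (of fun i j => (X + 1 : ℤ[X]) ^ (a i * b j)).det.coeff c = 0 := by
  rw [coeff_det_X_add_one_pow]
  refine sum_eq_zero fun k hk => ?_
  have hk : ∑ i, k i = c := (mem_piAntidiag.1 hk).1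
  refine det_choose_eq_zero_of_not_injective a b (fun hinj => ?_) (by omega)
  have := Fin.sum_val_le_sum_of_injective hinj
  omega

theorem prod_factorial_mul_coeff_det_X_add_one_pow :
    (∏ i : Fin n, ((i : ℕ)! : ℤ)) *
        (of fun i j => (X + 1 : ℤ[X]) ^ (a i * b j)).det.coeff (∑ i : Fin n, (i : ℕ)) =
      (vandermonde fun i => (a i : ℤ)).det * (vandermonde fun i => (b i : ℤ)).det := by
  rw [coeff_det_X_add_one_pow, mul_sum, Fin.sum_piAntidiag_eq_sum_perm,
    ← sum_perm_prod_pow_mul_det]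
  · refine sum_congr rfl fun σ _ => ?_
    rw [← Equiv.prod_comp σ, prod_factorial_mul_det_choose a b _
      (Equiv.sum_comp σ (fun i : Fin n => (i : ℕ))).le]
  · intro k hk hinj
    rw [det_choose_eq_zero_of_not_injective a b hinj (mem_piAntidiag.1 hk).1.le, mul_zero]

theorem exists_det_X_pow_eq_X_sub_one_pow_mul :
    ∃ Q : ℤ[X],
      (of fun i j => (X : ℤ[X]) ^ (a i * b j)).det = (X - 1) ^ (∑ i : Fin n, (i : ℕ)) * Q ∧
      (∏ i : Fin n, ((i : ℕ)! : ℤ)) * Q.eval 1 =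
        (vandermonde fun i => (a i : ℤ)).det * (vandermonde fun i => (b i : ℤ)).det := by
  have hcomp : ((of fun i j => (X : ℤ[X]) ^ (a i * b j)).det).comp (X + 1) =
      (of fun i j => (X + 1 : ℤ[X]) ^ (a i * b j)).det := by
    rw [← coe_compRingHom_apply, RingHom.map_det]
    congr 1
    ext i j
    simp
  obtain ⟨Q, hPQ, hQ⟩ := exists_eq_X_sub_one_pow_mul _ _ fun c hc =>
    hcomp ▸ coeff_det_X_add_one_pow_of_lt a b hc
  exact ⟨Q, hPQ, by rw [hQ, hcomp, prod_factorial_mul_coeff_det_X_add_one_pow]⟩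

end ShiftedDeterminant

theorem Matrix.not_dvd_det_vandermonde {p n : ℕ} (hp : p.Prime) {v : Fin n → ℕ}
    (hv : Injective v) (hvp : ∀ i, v i < p) : ¬(p : ℤ) ∣ (vandermonde fun i => (v i : ℤ)).det := by
  have := Fact.mk hp
  have hcast : ((vandermonde fun i => (v i : ℤ)).det : ZMod p) =
      (vandermonde fun i => (v i : ZMod p)).det := by
    rw [← eq_intCast (Int.castRingHom (ZMod p)), RingHom.map_det]
    congr 1
    ext i j
    simp [vandermonde_apply]
  rw [← ZMod.intCast_zmod_eq_zero_iff_dvd, hcast, ← Ne, det_vandermonde_ne_zero_iff]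
  intro i j hij
  rw [ZMod.natCast_eq_natCast_iff', Nat.mod_eq_of_lt (hvp i), Nat.mod_eq_of_lt (hvp j)] at hij
  exact hv hij

theorem IsPrimitiveRoot.prime_dvd_eval_one {K : Type*} [Field K] [CharZero K]
    {p : ℕ} (hp : p.Prime) {ξ : K} (hξ : IsPrimitiveRoot ξ p) {Q : ℤ[X]} (hQ : aeval ξ Q = 0) :
    (p : ℤ) ∣ Q.eval 1 := by
  have := Fact.mk hp
  obtain ⟨R, rfl⟩ : cyclotomic p ℤ ∣ Q := by
    rw [cyclotomic_eq_minpoly hξ hp.pos]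
    exact minpoly.isIntegrallyClosed_dvd (hξ.isIntegral hp.pos) hQ
  rw [eval_mul, eval_one_cyclotomic_prime]
  exact dvd_mul_right _ _

/-- Chebotarëv: every square submatrix of the Vandermonde matrix
(ξ^{ij}) at a primitive p-th root of unity is invertible. -/
theorem stmt_15 (p : ℕ) (hp : p.Prime) (ξ : ℂ) (hξ : IsPrimitiveRoot ξ p)
    (n : ℕ) (I J : Fin n → Fin p)
    (hI : Function.Injective I) (hJ : Function.Injective J) :
    (Matrix.of fun i j : Fin n => ξ ^ ((I i : ℕ) * (J j : ℕ))).det ≠ 0 := by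
  obtain ⟨Q, hPQ, hQ⟩ :=
    exists_det_X_pow_eq_X_sub_one_pow_mul (fun i => (I i : ℕ)) (fun j => (J j : ℕ))
  have hdet : (of fun i j : Fin n => ξ ^ ((I i : ℕ) * (J j : ℕ))).det =
      (ξ - 1) ^ (∑ i : Fin n, (i : ℕ)) * aeval ξ Q := by
    have := congrArg (aeval ξ) hPQ
    rw [AlgHom.map_det] at this
    convert this using 2
    · ext i j
      simp [AlgHom.mapMatrix_apply]
    · simp
  intro h0
  have hQξ : aeval ξ Q = 0 := (mul_eq_zero.1 (hdet ▸ h0)).resolve_left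
    (pow_ne_zero _ (sub_ne_zero.2 (hξ.ne_one hp.one_lt)))
  have hpV : (p : ℤ) ∣ (vandermonde fun i => ((I i : ℕ) : ℤ)).det *
      (vandermonde fun j => ((J j : ℕ) : ℤ)).det :=
    hQ ▸ dvd_mul_of_dvd_right (hξ.prime_dvd_eval_one hp hQξ) _
  rcases (Nat.prime_iff_prime_int.1 hp).dvd_mul.1 hpV with h | h
  · exact not_dvd_det_vandermonde hp (Fin.val_injective.comp hI) (fun i => (I i).isLt) h
  · exact not_dvd_det_vandermonde hp (Fin.val_injective.comp hJ) (fun i => (J i).isLt) h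
end

section
/- Let p be prime, ξ a primitive p-th root of unity, K ⊆ ℤ_p a subset of size r, and T₁, ..., T_m pairwise disjoint nonempty subsets of ℤ_p with |T₁ ∪ ... ∪ T_m| ≤ r. Then the vectors v_j = (Σ_{g∈T_j} ξ^{kg})_{k∈K} ∈ ℂ^r for 1 ≤ j ≤ m are linearly independent. -/
/-!
Frenkel's proof of Chebotarëv's theorem. In `ℤ[ζ] = ℤ[X]/(Φ_p)` reduction modulo `ζ - 1` is a
ring map onto `ZMod p` sending `ζ` to `1`. If `c` is a kernel vector of `(ζ^(b a))_(b ∈ B, a ∈ A)`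
with `#A ≤ #B`, the polynomial `∑ c_a X^a` vanishes at the `#B` distinct points `ζ^b`, so its
reduction is divisible by `(X - 1)^#B` while having at most `#A` terms and degree `< p`. Frenkel's
lemma forces the reduction to vanish, i.e. `ζ - 1` divides every `c_a`, and `c / (ζ - 1)` is again
a kernel vector; since multiplicities are finite in the noetherian domain `ℤ[ζ]`, `c = 0`.
Determinants carry this to any field of characteristic zero, and adding linearly independent
columns over disjoint nonempty blocks keeps them independent.
-/

open Finset Function Polynomial
open scoped Matrix

theorem pow_zmod_val_mul {M : Type*} [Monoid M] {p : ℕ} {x : M} (hx : x ^ p = 1) (a b : ZMod p) :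
    x ^ (a * b).val = (x ^ a.val) ^ b.val := by
  rw [← pow_mul, ZMod.val_mul, ← pow_eq_pow_mod _ hx]

namespace Polynomial

variable {R : Type*} [CommRing R]

theorem coeff_X_mul_derivative_sub_C_mul (f : R[X]) (a b : ℕ) :
    (X * derivative f - C (a : R) * f).coeff b = ((b : R) - a) * f.coeff b := by
  cases b <;> simp [coeff_derivative, sub_mul, mul_comm]

theorem support_X_mul_derivative_sub_C_mul [IsDomain R] {p : ℕ} [CharP R p] {f : R[X]}
    (hf : f.support ⊆ range p) {a : ℕ} (ha : a < p) :
    (X * derivative f - C (a : R) * f).support = f.support.erase a := by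
  ext b
  simp only [mem_support_iff, mem_erase, coeff_X_mul_derivative_sub_C_mul, ne_eq, mul_eq_zero,
    sub_eq_zero, not_or, and_congr_left_iff]
  intro hb
  have hbp : b < p := mem_range.1 (hf (mem_support_iff.2 hb))
  rw [CharP.natCast_eq_natCast R p, Nat.ModEq, Nat.mod_eq_of_lt hbp, Nat.mod_eq_of_lt ha]

theorem X_sub_C_pow_dvd_X_mul_derivative_sub_C_mul {f : R[X]} {r : R} {n : ℕ}
    (h : (X - C r) ^ (n + 1) ∣ f) (a : R) : (X - C r) ^ n ∣ X * derivative f - C a * f :=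
  dvd_sub ((pow_sub_one_dvd_derivative_of_pow_dvd h).mul_left X)
    (((pow_dvd_pow _ n.le_succ).trans h).mul_left _)

/-- Frenkel's lemma. The induction step replaces `f` by `X f' - a f`, which kills the term of
degree `a` but no other (exponents are distinct mod `p`) and is divisible by `(X - r)^(n - 1)`. -/
theorem eq_zero_of_X_sub_C_pow_dvd_of_card_support_le [IsDomain R] {p : ℕ} [CharP R p] {r : R}
    (hr : r ≠ 0) {n : ℕ} {f : R[X]} (hsupp : f.support ⊆ range p) (hcard : #f.support ≤ n)
    (hdvd : (X - C r) ^ n ∣ f) : f = 0 := by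
  induction n generalizing f with
  | zero => simpa using hcard
  | succ n ih =>
    by_contra hf
    obtain ⟨a, ha⟩ := nonempty_support_iff.2 hf
    have hap : a < p := mem_range.1 (hsupp ha)
    have hg := support_X_mul_derivative_sub_C_mul hsupp hap
    have hg0 := ih (hg ▸ (erase_subset _ _).trans hsupp)
      (by rw [hg, card_erase_of_mem ha]; omega) (X_sub_C_pow_dvd_X_mul_derivative_sub_C_mul hdvd _)
    have hmonomial : #f.support = 1 := by
      rw [← card_erase_add_one ha, ← hg, hg0, support_zero, card_empty]
    obtain ⟨k, c, hc, rfl⟩ := card_support_eq_one.1 hmonomial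
    have hroot : (C c * X ^ k).IsRoot r :=
      dvd_iff_isRoot.1 ((dvd_pow_self _ n.succ_ne_zero).trans hdvd)
    simp [hc, hr] at hroot

variable {ι S : Type*} [Semiring S]

theorem coeff_sum_monomial_of_injOn {s : Finset ι} {e : ι → ℕ} (he : Set.InjOn e s) (c : ι → S)
    {i : ι} (hi : i ∈ s) : (∑ j ∈ s, monomial (e j) (c j)).coeff (e i) = c i := by
  rw [finsetSum_coeff, sum_eq_single_of_mem i hi, coeff_monomial_same]
  intro j hj hji
  rw [coeff_monomial, if_neg fun h => hji (he hj hi h)]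

theorem support_sum_monomial_subset (s : Finset ι) (e : ι → ℕ) (c : ι → S) :
    (∑ j ∈ s, monomial (e j) (c j)).support ⊆ s.image e := by
  intro n hn
  by_contra hns
  refine mem_support_iff.1 hn ?_
  rw [finsetSum_coeff]
  refine sum_eq_zero fun j hj => ?_
  rw [coeff_monomial, if_neg (fun h => hns (mem_image.2 ⟨j, hj, h⟩))]

theorem prod_X_sub_C_dvd_of_isRoot {R : Type*} [CommRing R] [IsDomain R] {s : Finset R} {f : R[X]}
    (h : ∀ x ∈ s, f.IsRoot x) : ∏ x ∈ s, (X - C x) ∣ f := by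
  rcases eq_or_ne f 0 with rfl | hf
  · exact dvd_zero _
  rw [prod_eq_multiset_prod, Multiset.prod_X_sub_C_dvd_iff_le_roots hf,
    Multiset.le_iff_subset s.nodup]
  exact fun x hx => (mem_roots hf).2 (h x hx)

end Polynomial

section CyclotomicIntegers

variable (p : ℕ) [hp : Fact p.Prime]

local notation "𝓡" => AdjoinRoot (cyclotomic p ℤ)
local notation "ζ" => AdjoinRoot.root (cyclotomic p ℤ)

instance : IsDomain 𝓡 :=
  AdjoinRoot.isDomain_of_prime
    (UniqueFactorizationMonoid.irreducible_iff_prime.1 (cyclotomic.irreducible hp.out.pos))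

noncomputable def cyclotomicReduction : 𝓡 →+* ZMod p :=
  AdjoinRoot.lift (Int.castRingHom _) 1 (by
    rw [eval₂_eq_eval_map, eval_one_map, eval_one_cyclotomic_prime]
    simp)

theorem cyclotomicReduction_root : cyclotomicReduction p ζ = 1 := AdjoinRoot.lift_root _

theorem cyclotomicReduction_mk (g : ℤ[X]) :
    cyclotomicReduction p (AdjoinRoot.mk _ g) = ((g.eval 1 : ℤ) : ZMod p) := by
  rw [cyclotomicReduction, AdjoinRoot.lift_mk, eval₂_eq_eval_map, eval_one_map]
  rfl

theorem root_sub_one_dvd_of_cyclotomicReduction_eq_zero {x : 𝓡}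
    (hx : cyclotomicReduction p x = 0) : ζ - 1 ∣ x := by
  obtain ⟨g, rfl⟩ := AdjoinRoot.mk_surjective x
  obtain ⟨t, ht⟩ :=
    (ZMod.intCast_zmod_eq_zero_iff_dvd _ p).1 ((cyclotomicReduction_mk p g).symm.trans hx)
  have hdvd_p : ζ - 1 ∣ (p : 𝓡) := by
    have := sub_dvd_eval_sub ζ 1 ((cyclotomic p ℤ).map (algebraMap ℤ 𝓡))
    rwa [eval_map_algebraMap, AdjoinRoot.aeval_eq, AdjoinRoot.mk_self, eval_one_map,
      eval_one_cyclotomic_prime, zero_sub, dvd_neg, map_natCast] at this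
  have hdvd_g := sub_dvd_eval_sub ζ 1 (g.map (algebraMap ℤ 𝓡))
  rw [eval_map_algebraMap, AdjoinRoot.aeval_eq, eval_one_map, ht, map_mul, map_natCast] at hdvd_g
  simpa using dvd_add hdvd_g (hdvd_p.mul_right (algebraMap ℤ 𝓡 t))

theorem not_isUnit_root_sub_one : ¬IsUnit (ζ - 1) := fun h => by
  simpa [cyclotomicReduction_root] using h.map (cyclotomicReduction p)

variable {p} {K : Type*} [Field K] {ξ : K}

noncomputable def cyclotomicEmbedding (hξ : IsPrimitiveRoot ξ p) : 𝓡 →+* K :=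
  AdjoinRoot.lift (Int.castRingHom K) ξ (by
    rw [eval₂_eq_eval_map, map_cyclotomic_int]
    exact hξ.isRoot_cyclotomic hp.out.pos)

theorem cyclotomicEmbedding_root (hξ : IsPrimitiveRoot ξ p) : cyclotomicEmbedding hξ ζ = ξ :=
  AdjoinRoot.lift_root _

theorem cyclotomicEmbedding_injective [CharZero K] (hξ : IsPrimitiveRoot ξ p) :
    Injective (cyclotomicEmbedding hξ) := by
  refine (injective_iff_map_eq_zero _).2 fun x hx => ?_
  obtain ⟨g, rfl⟩ := AdjoinRoot.mk_surjective x
  have hg : aeval ξ g = 0 := by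
    rwa [aeval_def, algebraMap_int_eq, ← AdjoinRoot.lift_mk]
  rw [AdjoinRoot.mk_eq_zero, cyclotomic_eq_minpoly hξ hp.out.pos]
  exact minpoly.isIntegrallyClosed_dvd (hξ.isIntegral hp.out.pos) hg

variable (p) in
theorem isPrimitiveRoot_root : IsPrimitiveRoot ζ p := by
  have h := Complex.isPrimitiveRoot_exp p hp.out.ne_zero
  exact .of_map_of_injective (f := cyclotomicEmbedding h) (by rwa [cyclotomicEmbedding_root])
    (cyclotomicEmbedding_injective h)

variable {A B : Finset (ZMod p)}

theorem cyclotomicReduction_eq_zero_of_sum_eq_zero (hAB : #A ≤ #B) {c : A → 𝓡}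
    (hc : ∀ b ∈ B, ∑ a : A, c a * ζ ^ (b * a).val = 0) (a : A) :
    cyclotomicReduction p (c a) = 0 := by
  set f : 𝓡[X] := ∑ a : A, monomial (a : ZMod p).val (c a)
  set red := cyclotomicReduction p
  have hval : Injective fun a : A => (a : ZMod p).val :=
    (ZMod.val_injective p).comp Subtype.val_injective
  have hroot : ∀ b ∈ B, f.IsRoot (ζ ^ b.val) := fun b hb => by
    rw [IsRoot.def, ← hc b hb]
    simp only [f, eval_finsetSum, eval_monomial,
      pow_zmod_val_mul (isPrimitiveRoot_root p).pow_eq_one]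
  have hpow_inj : Set.InjOn (fun b : ZMod p => ζ ^ b.val) B := fun b _ b' _ h =>
    ZMod.val_injective p ((isPrimitiveRoot_root p).pow_inj (ZMod.val_lt b) (ZMod.val_lt b') h)
  have hdvd : (X - C 1) ^ #B ∣ f.map red := by
    have := map_dvd (mapRingHom red)
      (prod_X_sub_C_dvd_of_isRoot (s := B.image (ζ ^ ·.val)) (by simpa using hroot))
    simpa [prod_image hpow_inj, red, cyclotomicReduction_root] using this
  have hf : f.map red = ∑ a : A, monomial (a : ZMod p).val (red (c a)) := by
    simp [f, Polynomial.map_sum]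
  have hsupp := support_sum_monomial_subset univ (fun a : A => (a : ZMod p).val) (red ∘ c)
  have hzero : f.map red = 0 := by
    refine eq_zero_of_X_sub_C_pow_dvd_of_card_support_le (p := p) one_ne_zero ?_ ?_ hdvd <;>
      rw [hf]
    · exact hsupp.trans (image_subset_iff.2 fun a _ => mem_range.2 (ZMod.val_lt _))
    · exact (card_le_card hsupp).trans (card_image_le.trans (by simpa using hAB))
  have : (f.map red).coeff (a : ZMod p).val = 0 := by rw [hzero, coeff_zero]
  rwa [hf, coeff_sum_monomial_of_injOn hval.injOn _ (mem_univ a)] at this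

theorem root_sub_one_pow_dvd_of_sum_eq_zero (hAB : #A ≤ #B) (t : ℕ) {c : A → 𝓡}
    (hc : ∀ b ∈ B, ∑ a : A, c a * ζ ^ (b * a).val = 0) (a : A) : (ζ - 1) ^ t ∣ c a := by
  induction t generalizing c with
  | zero => exact one_dvd _
  | succ t ih =>
    choose d hd using fun a =>
      root_sub_one_dvd_of_cyclotomicReduction_eq_zero p
        (cyclotomicReduction_eq_zero_of_sum_eq_zero hAB hc a)
    have hd_sum : ∀ b ∈ B, ∑ a : A, d a * ζ ^ (b * a).val = 0 := fun b hb => by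
      have h := hc b hb
      simp_rw [hd, mul_assoc, ← mul_sum] at h
      exact (mul_eq_zero.1 h).resolve_left
        (sub_ne_zero.2 ((isPrimitiveRoot_root p).ne_one hp.out.one_lt))
    rw [hd a, pow_succ']
    exact mul_dvd_mul_left _ (ih hd_sum)

theorem eq_zero_of_sum_mul_root_pow_eq_zero (hAB : #A ≤ #B) {c : A → 𝓡}
    (hc : ∀ b ∈ B, ∑ a : A, c a * ζ ^ (b * a).val = 0) : c = 0 := by
  funext a
  by_contra hca
  obtain ⟨t, ht⟩ := FiniteMultiplicity.of_not_isUnit (not_isUnit_root_sub_one p) hca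
  exact ht (root_sub_one_pow_dvd_of_sum_eq_zero hAB (t + 1) hc a)

end CyclotomicIntegers

theorem Matrix.exists_mulVec_map_eq_zero_iff {n R S : Type*} [Fintype n] [DecidableEq n]
    [CommRing R] [IsDomain R] [CommRing S] [IsDomain S] {f : R →+* S}
    (hf : Injective f) (M : Matrix n n R) :
    (∃ v, v ≠ 0 ∧ M.map f *ᵥ v = 0) ↔ ∃ v, v ≠ 0 ∧ M *ᵥ v = 0 := by
  rw [exists_mulVec_eq_zero_iff, exists_mulVec_eq_zero_iff, ← RingHom.mapMatrix_apply,
    ← RingHom.map_det, map_eq_zero_iff f hf]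

namespace IsPrimitiveRoot

variable {p : ℕ} [Fact p.Prime] {K : Type*} [Field K] [CharZero K] {ξ : K} {A B : Finset (ZMod p)}

theorem eq_zero_of_sum_mul_pow_val_mul_eq_zero (hξ : IsPrimitiveRoot ξ p) (hAB : #A = #B)
    {g : A → K} (hg : ∀ b ∈ B, ∑ a : A, g a * ξ ^ (b * a).val = 0) : g = 0 := by
  classical
  by_contra hg0
  let e : A ≃ B := equivOfCardEq hAB
  let N : Matrix A A (AdjoinRoot (cyclotomic p ℤ)) :=
    .of fun i a => AdjoinRoot.root _ ^ ((e i : ZMod p) * a).val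
  obtain ⟨w, hw0, hw⟩ :=
    (Matrix.exists_mulVec_map_eq_zero_iff (cyclotomicEmbedding_injective hξ) N).1
      ⟨g, hg0, funext fun i => by
        simpa [N, Matrix.mulVec, dotProduct, Matrix.map_apply, cyclotomicEmbedding_root, mul_comm]
          using hg _ (e i).2⟩
  refine hw0 (eq_zero_of_sum_mul_root_pow_eq_zero hAB.le fun b hb => ?_)
  simpa [N, Matrix.mulVec, dotProduct, mul_comm, e] using congrFun hw (e.symm ⟨b, hb⟩)

theorem linearIndepOn_pow_val_mul (hξ : IsPrimitiveRoot ξ p) (hAB : #A ≤ #B) :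
    LinearIndepOn K (fun a (b : B) => ξ ^ ((b : ZMod p) * a).val) (A : Set (ZMod p)) := by
  obtain ⟨B', hB'B, hB'⟩ := exists_subset_card_eq hAB
  rw [LinearIndepOn, Fintype.linearIndependent_iff]
  intro g hg
  refine congrFun (hξ.eq_zero_of_sum_mul_pow_val_mul_eq_zero hB'.symm fun b hb => ?_)
  simpa [mul_comm] using congrFun hg ⟨b, hB'B hb⟩

end IsPrimitiveRoot

theorem LinearIndepOn.linearIndependent_finset_sum {ι J R V : Type*} [Ring R] [AddCommGroup V]
    [Module R V] {v : ι → V} {T : J → Finset ι} (hv : LinearIndepOn R v (⋃ j, (T j : Set ι)))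
    (hdisj : Pairwise (Disjoint on T)) (hne : ∀ j, (T j).Nonempty) :
    LinearIndependent R fun j => ∑ x ∈ T j, v x := by
  classical
  rw [linearIndependent_iff']
  intro s g hg j hj
  have hvs : LinearIndepOn R v (s.biUnion T : Set ι) :=
    hv.mono (by simpa using fun i _ => Set.subset_iUnion (fun i => (T i : Set ι)) i)
  let w : ι → R := fun x => ∑ i ∈ s, if x ∈ T i then g i else 0
  have hw : ∀ i ∈ s, ∀ x ∈ T i, w x = g i := fun i hi x hx => by
    simp only [w]
    rw [sum_eq_single_of_mem i hi fun k _ hki => if_neg fun hxk =>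
      disjoint_left.1 (hdisj hki) hxk hx, if_pos hx]
  have hsum : ∑ x ∈ s.biUnion T, w x • v x = 0 := by
    rw [sum_biUnion (hdisj.set_pairwise _), ← hg]
    refine sum_congr rfl fun i hi => ?_
    rw [smul_sum]
    exact sum_congr rfl fun x hx => by rw [hw i hi x hx]
  obtain ⟨x, hx⟩ := hne j
  rw [← hw j hj x hx]
  exact linearIndepOn_finset_iff.1 hvs w hsum x (mem_biUnion.2 ⟨j, hj, hx⟩)

/-- merging disjoint columns of a Vandermonde submatrix by addition
yields linearly independent vectors. -/
theorem stmt_16 (p : ℕ) [Fact p.Prime] (ξ : ℂ) (hξ : IsPrimitiveRoot ξ p)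
    (r : ℕ) (K : Finset (ZMod p)) (hK : K.card = r)
    (m : ℕ) (T : Fin m → Finset (ZMod p))
    (hdisj : ∀ i j : Fin m, i ≠ j → Disjoint (T i) (T j))
    (hne : ∀ j : Fin m, (T j).Nonempty)
    (hcard : (Finset.univ.biUnion T).card ≤ r) :
    LinearIndependent ℂ
      (fun j : Fin m => fun k : K => ∑ g ∈ T j, ξ ^ ((k : ZMod p) * g).val) := by
  have hv := hξ.linearIndepOn_pow_val_mul (A := univ.biUnion T) (B := K)
    (hcard.trans_eq hK.symm)
  simp only [coe_biUnion, coe_univ, Set.mem_univ, Set.iUnion_true] at hv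
  simpa only [Finset.sum_fn] using hv.linearIndependent_finset_sum (fun i j => hdisj i j) hne
end

section
/- Consider the Cayley graph X = Cay(ℤ_4 × ℤ_4, S) with S = {(1,0),(3,0),(0,1),(0,3),(1,1),(3,3)}. There is no graph automorphism φ of X with φ((0,0)) = (0,0), φ((1,3)) = (0,2), that maps each of the sets {(1,0),(3,0),(0,1),(0,3)}, {(1,1),(3,3)}, {(0,2),(1,3),(2,0),(3,1)}, {(2,2)}, {(1,2),(2,1),(2,3),(3,2)} to itself. -/
/-- the Cayley graph of ℤ_4 × ℤ_4 with connection set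
S = {(1,0),(3,0),(0,1),(0,3),(1,1),(3,3)} has no automorphism fixing (0,0),
sending (1,3) to (0,2), and preserving the listed color classes. -/
theorem stmt_17 :
    ¬ ∃ φ : (ZMod 4 × ZMod 4) ≃ (ZMod 4 × ZMod 4),
      (∀ g g' : ZMod 4 × ZMod 4,
        g' - g ∈ ({(1,0),(3,0),(0,1),(0,3),(1,1),(3,3)} : Set (ZMod 4 × ZMod 4)) ↔
        φ g' - φ g ∈ ({(1,0),(3,0),(0,1),(0,3),(1,1),(3,3)} : Set (ZMod 4 × ZMod 4))) ∧
      φ (0,0) = (0,0) ∧ φ (1,3) = (0,2) ∧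
      (φ '' ({(1,0),(3,0),(0,1),(0,3)} : Set (ZMod 4 × ZMod 4)) = {(1,0),(3,0),(0,1),(0,3)}) ∧
      (φ '' ({(1,1),(3,3)} : Set (ZMod 4 × ZMod 4)) = {(1,1),(3,3)}) ∧
      (φ '' ({(0,2),(1,3),(2,0),(3,1)} : Set (ZMod 4 × ZMod 4)) = {(0,2),(1,3),(2,0),(3,1)}) ∧
      (φ '' ({(2,2)} : Set (ZMod 4 × ZMod 4)) = {(2,2)}) ∧
      (φ '' ({(1,2),(2,1),(2,3),(3,2)} : Set (ZMod 4 × ZMod 4)) = {(1,2),(2,1),(2,3),(3,2)}) := by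
  rintro ⟨φ, hE, h0, h13, hA, -, -, -, -⟩
  have hm : ∀ x ∈ ({(1,0),(3,0),(0,1),(0,3)} : Set (ZMod 4 × ZMod 4)),
      φ x ∈ ({(1,0),(3,0),(0,1),(0,3)} : Set (ZMod 4 × ZMod 4)) := by
    intro x hx; rw [← hA]; exact Set.mem_image_of_mem φ hx
  have h1 := hm (1,0) (by simp [Set.mem_insert_iff])
  have h2 := hm (0,3) (by right; right; right; rfl)
  have e1 := (hE (1,0) (1,3)).mp (by simp only [Set.mem_insert_iff, Set.mem_singleton_iff]; decide)
  have e2 := (hE (0,3) (1,3)).mp (by simp only [Set.mem_insert_iff, Set.mem_singleton_iff]; decide)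
  have e3 := (hE (1,0) (0,3)).mp (by simp only [Set.mem_insert_iff, Set.mem_singleton_iff]; decide)
  rw [h13] at e1 e2
  have hne : φ (1,0) ≠ φ (0,3) := fun h => absurd (φ.injective h) (by decide)
  simp only [Set.mem_insert_iff, Set.mem_singleton_iff] at h1 h2 e1 e2 e3
  rcases h1 with h | h | h | h <;> rcases h2 with h' | h' | h' | h' <;>
    simp only [h, h'] at e1 e2 e3 hne <;>
    revert e1 e2 e3 hne <;> decide
end
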